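/- Let k ∈ (0,1), n = k+1, Φ strictly convex C¹ with Φ(0) = Φ'(0) = 0 and Φ(x) ≥ c x^{1+1/k} for large x, and ρ_ext ∈ L¹₊ ∩ L^{4/3}(ℝ²). For every f ∈ F_M the spatial density ρ_f belongs to F_M^r and E_C(f) ≥ E_C^r(ρ_f); moreover, if f minimizes E_C over F_M then E_C(f) = E_C^r(ρ_f). -/

import Mathlib

open MeasureTheory Filter Real Set
open scoped Topology ENNReal NNReal RealInnerProductSpace

noncomputable section

abbrev Plane : Type := EuclideanSpace ℝ (Fin 2)
abbrev Phase : Type := Plane × Plane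

/-- Gravitational potential induced by a density on the plane. -/
def Upot (ρ : Plane → ℝ) (x : Plane) : ℝ := -∫ y : Plane, ρ y / dist x y

/-- Kinetic energy. -/
def Ekin (f : Phase → ℝ) : ℝ := ∫ p : Phase, (‖p.2‖ ^ 2 / 2) * f p

/-- Casimir functional. -/
def Casimir (Φ : ℝ → ℝ) (f : Phase → ℝ) : ℝ := ∫ p : Phase, Φ (f p)

/-- Spatial density induced by a phase-space density. -/
def spatialDensity (f : Phase → ℝ) (x : Plane) : ℝ := ∫ v : Plane, f (x, v)

/-- Self-interaction potential energy. -/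
def Epot1 (ρ : Plane → ℝ) : ℝ := -(1 / 2) * ∫ x : Plane, ∫ y : Plane, ρ x * ρ y / dist x y

/-- External potential energy. -/
def EpotExt (ρext ρ : Plane → ℝ) : ℝ := -∫ x : Plane, ∫ y : Plane, ρ x * ρext y / dist x y

/-- Total potential energy. -/
def Epot (ρext ρ : Plane → ℝ) : ℝ := Epot1 ρ + EpotExt ρext ρ

/-- Casimir-Energy functional. -/
def EC (Φ : ℝ → ℝ) (ρext : Plane → ℝ) (f : Phase → ℝ) : ℝ :=
  Ekin f + Epot ρext (spatialDensity f) + Casimir Φ f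

/-- The feasible set `F_M`. -/
def FM (Φ : ℝ → ℝ) (M : ℝ) : Set (Phase → ℝ) :=
  {f | Integrable f ∧ (∀ p, 0 ≤ f p) ∧
       Integrable (fun p : Phase => (‖p.2‖ ^ 2 / 2) * f p) ∧
       Integrable (fun p : Phase => Φ (f p)) ∧
       (∫ p : Phase, f p) = M}

/-- The integrand functional defining `Ψ`. -/
def Ifun (Φ : ℝ → ℝ) (g : Plane → ℝ) : ℝ := ∫ v : Plane, ((‖v‖ ^ 2 / 2) * g v + Φ (g v))

/-- The constraint set for `Ψ`. -/
def Gset (Φ : ℝ → ℝ) (r : ℝ) : Set (Plane → ℝ) :=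
  {g | Integrable g ∧ (∀ v, 0 ≤ g v) ∧
       Integrable (fun v : Plane => (‖v‖ ^ 2 / 2) * g v + Φ (g v)) ∧
       (∫ v : Plane, g v) = r}

/-- The reduced Casimir function `Ψ`. -/
def Psi (Φ : ℝ → ℝ) (r : ℝ) : ℝ := sInf (Ifun Φ '' Gset Φ r)

/-- The reduced feasible set `F_M^r`. -/
def FMr (Φ : ℝ → ℝ) (M : ℝ) : Set (Plane → ℝ) :=
  {ρ | Integrable ρ ∧ (∀ x, 0 ≤ ρ x) ∧ MemLp ρ (ENNReal.ofReal (4 / 3)) ∧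
       Integrable (fun x => Psi Φ (ρ x)) ∧ (∫ x : Plane, ρ x) = M}

/-- The reduced Casimir-Energy functional. -/
def ECr (Φ : ℝ → ℝ) (ρext ρ : Plane → ℝ) : ℝ :=
  (∫ x : Plane, Psi Φ (ρ x)) + Epot ρext ρ

/-- The infimum of the reduced problem. -/
def IM (Φ : ℝ → ℝ) (ρext : Plane → ℝ) (M : ℝ) : ℝ := sInf (ECr Φ ρext '' FMr Φ M)

/-- Inverse of the derivative (on `[0,∞)`) of a function, extended by `0` on `(-∞,0]`. -/
def invDerivOn (F : ℝ → ℝ) (y : ℝ) : ℝ :=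
  if y ≤ 0 then 0 else Function.invFun (derivWithin F (Set.Ici 0)) y

/-- A density on the plane is spherically symmetric and nonincreasing. -/
def SphSymmDecr (ρ : Plane → ℝ) : Prop :=
  ∃ φ : ℝ → ℝ, AntitoneOn φ (Set.Ici 0) ∧ (∀ r ∈ Set.Ici (0 : ℝ), 0 ≤ φ r) ∧
    ∀ x : Plane, ρ x = φ ‖x‖

/-- A density on the plane is strictly symmetric decreasing. -/
def StrictSphSymmDecr (ρ : Plane → ℝ) : Prop :=
  ∃ φ : ℝ → ℝ, StrictAntiOn φ (Set.Ici 0) ∧ (∀ r ∈ Set.Ici (0 : ℝ), 0 ≤ φ r) ∧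
    ∀ x : Plane, ρ x = φ ‖x‖

/-- Weak convergence in `L^p`, tested against all elements of the dual `L^q`. -/
def TendstoWeakly {α : Type*} [MeasurableSpace α] (μ : Measure α) (q : ℝ)
    (ρ : ℕ → α → ℝ) (ρ₀ : α → ℝ) : Prop :=
  ∀ g : α → ℝ, MemLp g (ENNReal.ofReal q) μ →
    Tendsto (fun i => ∫ x, ρ i x * g x ∂μ) atTop (𝓝 (∫ x, ρ₀ x * g x ∂μ))

/-- Boundedness of a sequence in `L^p`. -/
def BoundedLp {α : Type*} [MeasurableSpace α] (μ : Measure α) (p : ℝ)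
    (ρ : ℕ → α → ℝ) : Prop :=
  ∃ C : ℝ, ∀ i, eLpNorm (ρ i) (ENNReal.ofReal p) μ ≤ ENNReal.ofReal C

/-!
For almost every `x` the velocity profile `f (x, ·)` competes in the infimum defining
`Ψ (ρ_f x)`, so integrating in `x` gives `E_C^r(ρ_f) ≤ E_C(f)`. The growth of `Φ` bounds the mass
of a profile by its energy, which yields `r ^ (4/3) ≲ r + Ψ r` and hence `ρ_f ∈ L^{4/3}`.
Conversely, velocity profiles that are almost optimal for `Ψ (ρ_f x)`, chosen measurably in `x`,
assemble into a `g ∈ F_M` with the same density and `E_kin(g) + C(g) ≤ ∫ Ψ(ρ_f) + o(1)`. The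
potential energy only sees the density, so if `f` minimizes then `E_C(f) ≤ E_C(g)` closes the gap.
-/

lemma ContinuousOn.comp_aestronglyMeasurable_of_nonneg {Φ : ℝ → ℝ} (hΦ : ContinuousOn Φ (Ici 0))
    {α : Type*} [MeasurableSpace α] {μ : Measure α} {g : α → ℝ}
    (hg : AEStronglyMeasurable g μ) (hg0 : ∀ a, 0 ≤ g a) :
    AEStronglyMeasurable (fun a => Φ (g a)) μ := by
  have hmax : Continuous fun y => Φ (max y 0) :=
    hΦ.comp_continuous (continuous_id.max continuous_const) fun y => le_max_right y 0
  simpa only [Function.comp_def, max_eq_left (hg0 _)] using hmax.comp_aestronglyMeasurable hg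

lemma exists_measurable_nonneg_ae_eq {α : Type*} [MeasurableSpace α] {μ : Measure α}
    {g : α → ℝ} (hg : AEStronglyMeasurable g μ) (hg0 : ∀ a, 0 ≤ g a) :
    ∃ g' : α → ℝ, Measurable g' ∧ (∀ a, 0 ≤ g' a) ∧ g' =ᵐ[μ] g := by
  refine ⟨fun a => max (hg.mk g a) 0, hg.stronglyMeasurable_mk.measurable.max measurable_const,
    fun a => le_max_right _ _, ?_⟩
  filter_upwards [hg.ae_eq_mk] with a ha
  rw [← ha, max_eq_left (hg0 a)]

lemma integrable_prod_of_integral_le {α β : Type*} [MeasurableSpace α] [MeasurableSpace β]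
    {μ : Measure α} {ν : Measure β} [SFinite ν] {F : α × β → ℝ}
    (hF : AEStronglyMeasurable F (μ.prod ν)) (hF0 : ∀ p, 0 ≤ F p)
    (hslice : ∀ x, Integrable (fun y => F (x, y)) ν) {G : α → ℝ} (hG : Integrable G μ)
    (hle : ∀ x, ∫ y, F (x, y) ∂ν ≤ G x) : Integrable F (μ.prod ν) := by
  refine (integrable_prod_iff hF).2 ⟨Eventually.of_forall hslice, ?_⟩
  refine hG.mono' hF.norm.integral_prod_right' (Eventually.of_forall fun x => ?_)
  simp only [Real.norm_of_nonneg (hF0 _)]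
  rw [Real.norm_of_nonneg (integral_nonneg fun y => hF0 _)]
  exact hle x

lemma integral_comp_smul_plane (F : Plane → ℝ) (s : ℝ) :
    ∫ v, F (s • v) = (s ^ 2)⁻¹ * ∫ v, F v := by
  rw [Measure.integral_comp_smul, finrank_euclideanSpace_fin, smul_eq_mul,
    abs_of_nonneg (by positivity)]

lemma memLp_of_rpow_le_mul_add {α : Type*} [MeasurableSpace α] {μ : Measure α} {p C : ℝ}
    (hp : 0 < p) {ψ : ℝ → ℝ} (hψ : ∀ r, 0 ≤ r → r ^ p ≤ C * (r + ψ r)) {ρ : α → ℝ}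
    (hρ : Integrable ρ μ) (hρ0 : ∀ x, 0 ≤ ρ x) (hψρ : Integrable (fun x => ψ (ρ x)) μ) :
    MemLp ρ (ENNReal.ofReal p) μ := by
  refine (integrable_norm_rpow_iff hρ.aestronglyMeasurable (by simpa using hp)
    ENNReal.ofReal_ne_top).1 ?_
  simp only [ENNReal.toReal_ofReal hp.le, Real.norm_of_nonneg (hρ0 _)]
  refine ((hρ.add hψρ).const_mul C).mono'
    ((Real.continuous_rpow_const hp.le).comp_aestronglyMeasurable hρ.aestronglyMeasurable)
    (Eventually.of_forall fun x => ?_)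
  rw [Real.norm_of_nonneg (Real.rpow_nonneg (hρ0 x) p)]
  exact hψ _ (hρ0 x)

lemma mem_Ico_zpow_floor_logb {b x : ℝ} (hb : 1 < b) (hx : 0 < x) :
    x ∈ Ico (b ^ ⌊logb b x⌋) (b * b ^ ⌊logb b x⌋) := by
  have hb0 : 0 < b := zero_lt_one.trans hb
  constructor
  · rw [← Real.rpow_intCast]
    exact (Real.le_logb_iff_rpow_le hb hx).1 (Int.floor_le _)
  · rw [← zpow_one_add₀ hb0.ne', ← Real.rpow_intCast, Int.cast_add, Int.cast_one, add_comm]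
    exact (Real.logb_lt_iff_lt_rpow hb hx).1 (Int.lt_floor_add_one _)

section ReducedCasimir

variable {Φ : ℝ → ℝ}

lemma kinetic_add_Phi_nonneg (hΦnonneg : ∀ x, 0 ≤ x → 0 ≤ Φ x) {g : Plane → ℝ} (hg : ∀ v, 0 ≤ g v)
    (v : Plane) : 0 ≤ (‖v‖ ^ 2 / 2) * g v + Φ (g v) := by
  have := hΦnonneg _ (hg v)
  have := hg v
  positivity

lemma Ifun_nonneg (hΦnonneg : ∀ x, 0 ≤ x → 0 ≤ Φ x) {g : Plane → ℝ} (hg : ∀ v, 0 ≤ g v) :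
    0 ≤ Ifun Φ g :=
  integral_nonneg (kinetic_add_Phi_nonneg hΦnonneg hg)

lemma bddBelow_Ifun_image_Gset (hΦnonneg : ∀ x, 0 ≤ x → 0 ≤ Φ x) (r : ℝ) :
    BddBelow (Ifun Φ '' Gset Φ r) :=
  ⟨0, by rintro _ ⟨g, hg, rfl⟩; exact Ifun_nonneg hΦnonneg hg.2.1⟩

lemma Psi_nonneg (hΦnonneg : ∀ x, 0 ≤ x → 0 ≤ Φ x) (r : ℝ) : 0 ≤ Psi Φ r :=
  Real.sInf_nonneg (by rintro _ ⟨g, hg, rfl⟩; exact Ifun_nonneg hΦnonneg hg.2.1)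

lemma Psi_le_Ifun (hΦnonneg : ∀ x, 0 ≤ x → 0 ≤ Φ x) {r : ℝ} {g : Plane → ℝ} (hg : g ∈ Gset Φ r) :
    Psi Φ r ≤ Ifun Φ g :=
  csInf_le (bddBelow_Ifun_image_Gset hΦnonneg r) (mem_image_of_mem _ hg)

lemma zero_mem_Gset (hΦ0 : Φ 0 = 0) : (fun _ => 0 : Plane → ℝ) ∈ Gset Φ 0 :=
  ⟨integrable_zero _ _ _, fun _ => le_rfl, by simp [hΦ0],
    integral_zero _ _⟩

lemma Ifun_zero (hΦ0 : Φ 0 = 0) : Ifun Φ (fun _ => 0) = 0 := by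
  simp [Ifun, hΦ0]

lemma Psi_of_neg {r : ℝ} (hr : r < 0) : Psi Φ r = 0 := by
  have : Gset Φ r = ∅ := eq_empty_of_forall_notMem fun g hg =>
    hr.not_ge (hg.2.2.2 ▸ integral_nonneg hg.2.1)
  rw [Psi, this, image_empty, Real.sInf_empty]

lemma Gset_nonempty (hΦ0 : Φ 0 = 0) {r : ℝ} (hr : 0 ≤ r) : (Gset Φ r).Nonempty := by
  set B : Set Plane := Metric.closedBall 0 1
  have hB : MeasurableSet B := measurableSet_closedBall
  have hvol : 0 < volume.real B :=
    ENNReal.toReal_pos (Metric.measure_closedBall_pos volume _ one_pos).ne'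
      measure_closedBall_lt_top.ne
  set C := r / volume.real B
  have hC : 0 ≤ C := by positivity
  refine ⟨B.indicator fun _ => C, ?_, indicator_nonneg fun _ _ => hC, ?_, ?_⟩
  · exact (integrable_indicator_iff hB).2 (integrableOn_const measure_closedBall_lt_top.ne)
  · have : (fun v : Plane => (‖v‖ ^ 2 / 2) * B.indicator (fun _ => C) v
        + Φ (B.indicator (fun _ => C) v)) = B.indicator fun v => (‖v‖ ^ 2 / 2) * C + Φ C := by
      ext v
      by_cases hv : v ∈ B <;> simp [hv, hΦ0]
    rw [this, integrable_indicator_iff hB]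
    exact (Continuous.continuousOn (by fun_prop)).integrableOn_compact (isCompact_closedBall _ _)
  · rw [integral_indicator_const _ hB, smul_eq_mul, mul_div_cancel₀ _ hvol.ne']

lemma integrable_kinetic_of_mem_Gset (hΦnonneg : ∀ x, 0 ≤ x → 0 ≤ Φ x) {r : ℝ} {g : Plane → ℝ}
    (hg : g ∈ Gset Φ r) : Integrable fun v => (‖v‖ ^ 2 / 2) * g v := by
  refine hg.2.2.1.mono' ((by fun_prop : Continuous fun v : Plane => ‖v‖ ^ 2 / 2)
    |>.aestronglyMeasurable.mul hg.1.aestronglyMeasurable) (Eventually.of_forall fun v => ?_)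
  have := hΦnonneg _ (hg.2.1 v)
  have := hg.2.1 v
  rw [Real.norm_of_nonneg (by positivity)]
  linarith

lemma integrable_Phi_of_mem_Gset (hΦnonneg : ∀ x, 0 ≤ x → 0 ≤ Φ x) {r : ℝ} {g : Plane → ℝ}
    (hg : g ∈ Gset Φ r) : Integrable fun v => Φ (g v) := by
  refine (hg.2.2.1.sub (integrable_kinetic_of_mem_Gset hΦnonneg hg)).congr (Eventually.of_forall ?_)
  simp

lemma Ifun_eq_of_mem_Gset (hΦnonneg : ∀ x, 0 ≤ x → 0 ≤ Φ x) {r : ℝ} {g : Plane → ℝ}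
    (hg : g ∈ Gset Φ r) :
    Ifun Φ g = (∫ v, (‖v‖ ^ 2 / 2) * g v) + ∫ v, Φ (g v) :=
  integral_add (integrable_kinetic_of_mem_Gset hΦnonneg hg) (integrable_Phi_of_mem_Gset hΦnonneg hg)

/-- Convexity and `Φ 0 = 0` give `Φ (t y) ≤ t Φ y` for `t ∈ [0, 1]`. -/
lemma const_mul_mem_Gset (hΦconv : ConvexOn ℝ (Ici 0) Φ) (hΦc : ContinuousOn Φ (Ici 0))
    (hΦ0 : Φ 0 = 0) (hΦnonneg : ∀ x, 0 ≤ x → 0 ≤ Φ x) {r : ℝ} {g : Plane → ℝ} (hg : g ∈ Gset Φ r)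
    {t : ℝ} (ht0 : 0 ≤ t) (ht1 : t ≤ 1) :
    (fun v => t * g v) ∈ Gset Φ (t * r) ∧ Ifun Φ (fun v => t * g v) ≤ t * Ifun Φ g := by
  obtain ⟨hint, hg0, hen, hmass⟩ := hg
  have htg0 : ∀ v, 0 ≤ t * g v := fun v => mul_nonneg ht0 (hg0 v)
  have hle : ∀ v : Plane, (‖v‖ ^ 2 / 2) * (t * g v) + Φ (t * g v)
      ≤ t * ((‖v‖ ^ 2 / 2) * g v + Φ (g v)) := fun v => by
    have := hΦconv.2 (mem_Ici.2 (hg0 v)) (mem_Ici.2 le_rfl) ht0 (sub_nonneg.2 ht1) (by ring)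
    simp only [smul_eq_mul, mul_zero, add_zero, hΦ0] at this
    linarith
  have hmeas : AEStronglyMeasurable
      (fun v : Plane => (‖v‖ ^ 2 / 2) * (t * g v) + Φ (t * g v)) volume :=
    ((by fun_prop : Continuous fun v : Plane => ‖v‖ ^ 2 / 2).aestronglyMeasurable.mul
      (hint.aestronglyMeasurable.const_mul t)).add
      (hΦc.comp_aestronglyMeasurable_of_nonneg (hint.aestronglyMeasurable.const_mul t) htg0)
  have hen' : Integrable fun v : Plane => (‖v‖ ^ 2 / 2) * (t * g v) + Φ (t * g v) :=
    (hen.const_mul t).mono' hmeas (Eventually.of_forall fun v => by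
      rw [Real.norm_of_nonneg (kinetic_add_Phi_nonneg hΦnonneg htg0 v)]
      exact hle v)
  refine ⟨⟨hint.const_mul t, htg0, hen', by rw [integral_const_mul, hmass]⟩, ?_⟩
  calc Ifun Φ (fun v => t * g v) ≤ ∫ v, t * ((‖v‖ ^ 2 / 2) * g v + Φ (g v)) :=
        integral_mono hen' (hen.const_mul t) hle
    _ = t * Ifun Φ g := integral_const_mul t _

lemma Psi_monotone (hΦconv : ConvexOn ℝ (Ici 0) Φ) (hΦc : ContinuousOn Φ (Ici 0))
    (hΦ0 : Φ 0 = 0) (hΦnonneg : ∀ x, 0 ≤ x → 0 ≤ Φ x) : Monotone (Psi Φ) := by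
  intro a b hab
  rcases lt_or_ge a 0 with ha | ha
  · rw [Psi_of_neg ha]
    exact Psi_nonneg hΦnonneg b
  rcases hab.eq_or_lt with rfl | hab
  · rfl
  have hb : 0 < b := ha.trans_lt hab
  refine le_csInf ((Gset_nonempty hΦ0 hb.le).image _) ?_
  rintro _ ⟨g, hg, rfl⟩
  obtain ⟨hmem, hle⟩ := const_mul_mem_Gset hΦconv hΦc hΦ0 hΦnonneg hg (div_nonneg ha hb.le)
    (div_le_one_of_le₀ hab.le hb.le)
  rw [div_mul_cancel₀ a hb.ne'] at hmem
  calc Psi Φ a ≤ _ := Psi_le_Ifun hΦnonneg hmem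
    _ ≤ a / b * Ifun Φ g := hle
    _ ≤ Ifun Φ g :=
      mul_le_of_le_one_left (Ifun_nonneg hΦnonneg hg.2.1) (div_le_one_of_le₀ hab.le hb.le)

/-- Slowing down all velocities by `√a` multiplies the mass by `a`, the kinetic energy by `a²`
and the Casimir energy by `a`. -/
lemma dilate_mem_Gset (hΦnonneg : ∀ x, 0 ≤ x → 0 ≤ Φ x) {r : ℝ} {g : Plane → ℝ} (hg : g ∈ Gset Φ r)
    {a : ℝ} (ha : 1 ≤ a) :
    (fun v => g ((√a)⁻¹ • v)) ∈ Gset Φ (a * r) ∧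
      Ifun Φ (fun v => g ((√a)⁻¹ • v)) ≤ a ^ 2 * Ifun Φ g := by
  set s := (√a)⁻¹
  have hs : s ≠ 0 := inv_ne_zero (Real.sqrt_pos.2 (by linarith)).ne'
  have hs2 : (s ^ 2)⁻¹ = a := by rw [inv_pow, inv_inv, Real.sq_sqrt (by linarith)]
  have hkin : (fun v : Plane => (‖v‖ ^ 2 / 2) * g (s • v))
      = fun v => a * ((‖s • v‖ ^ 2 / 2) * g (s • v)) := by
    ext v
    rw [norm_smul, mul_pow, Real.norm_eq_abs, sq_abs, ← hs2]
    field_simp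
  have hkin_int : Integrable fun v : Plane => (‖v‖ ^ 2 / 2) * g (s • v) := by
    rw [hkin]
    exact ((integrable_kinetic_of_mem_Gset hΦnonneg hg).comp_smul hs).const_mul a
  have hPhi_int : Integrable fun v => Φ (g (s • v)) :=
    (integrable_Phi_of_mem_Gset hΦnonneg hg).comp_smul hs
  have hmem : (fun v => g (s • v)) ∈ Gset Φ (a * r) :=
    ⟨hg.1.comp_smul hs, fun v => hg.2.1 _, hkin_int.add hPhi_int,
      by rw [integral_comp_smul_plane (g ·), hs2, hg.2.2.2]⟩
  refine ⟨hmem, ?_⟩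
  have hK : 0 ≤ ∫ v, (‖v‖ ^ 2 / 2) * g v :=
    integral_nonneg fun v => mul_nonneg (by positivity) (hg.2.1 v)
  rw [Ifun_eq_of_mem_Gset hΦnonneg hmem, Ifun_eq_of_mem_Gset hΦnonneg hg, hkin, integral_const_mul,
    integral_comp_smul_plane (fun w => (‖w‖ ^ 2 / 2) * g w),
    integral_comp_smul_plane (fun w => Φ (g w)), hs2]
  have hC : 0 ≤ ∫ v, Φ (g v) := integral_nonneg fun v => hΦnonneg _ (hg.2.1 v)
  nlinarith [mul_nonneg (sub_nonneg.2 ha) (mul_nonneg (zero_le_one.trans ha) hC)]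

/-- Three regimes: `y ≤ A` inside the ball, `y > A` (paid by the growth of `Φ`), and `‖v‖ ≥ R`
(paid by the kinetic energy). -/
lemma le_indicator_add_mul_energy (hΦnonneg : ∀ x, 0 ≤ x → 0 ≤ Φ x) {k c x₀ : ℝ} (hk : 0 < k)
    (hc : 0 < c) (hgrowth : ∀ x, x₀ ≤ x → c * x ^ (1 + 1 / k) ≤ Φ x) {A R : ℝ} (hA : 0 < A)
    (hAx₀ : x₀ ≤ A) (hR : 0 < R) {y : ℝ} (hy : 0 ≤ y) (v : Plane) :
    y ≤ (Metric.ball 0 R).indicator (fun _ => A) v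
      + (1 / (c * A ^ (1 / k)) + 2 / R ^ 2) * ((‖v‖ ^ 2 / 2) * y + Φ y) := by
  have hkin : 0 ≤ (‖v‖ ^ 2 / 2) * y := by positivity
  have hPhi := hΦnonneg y hy
  have hind : 0 ≤ (Metric.ball 0 R).indicator (fun _ => A) v :=
    indicator_nonneg (fun _ _ => hA.le) v
  have hcA : 0 < c * A ^ (1 / k) := by positivity
  have hterm₁ : 0 ≤ 1 / (c * A ^ (1 / k)) * ((‖v‖ ^ 2 / 2) * y + Φ y) := by positivity
  have hterm₂ : 0 ≤ 2 / R ^ 2 * ((‖v‖ ^ 2 / 2) * y + Φ y) := by positivity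
  rw [add_mul]
  by_cases hhigh : A < y
  · have hpow : A ^ (1 / k) * y ≤ y ^ (1 + 1 / k) := by
      rw [Real.rpow_add (hA.trans hhigh), Real.rpow_one, mul_comm]
      exact mul_le_mul_of_nonneg_left (by gcongr) hy
    have : y ≤ 1 / (c * A ^ (1 / k)) * ((‖v‖ ^ 2 / 2) * y + Φ y) := by
      rw [div_mul_eq_mul_div, one_mul, le_div_iff₀ hcA]
      nlinarith [hgrowth y (hAx₀.trans hhigh.le)]
    linarith
  by_cases hv : v ∈ Metric.ball 0 R
  · rw [indicator_of_mem hv]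
    linarith
  · have hRv : R ≤ ‖v‖ := by simpa using hv
    have : y ≤ 2 / R ^ 2 * ((‖v‖ ^ 2 / 2) * y + Φ y) := by
      rw [div_mul_eq_mul_div, le_div_iff₀ (by positivity)]
      nlinarith [mul_le_mul_of_nonneg_right (pow_le_pow_left₀ hR.le hRv 2) hy]
    linarith

lemma mass_le_of_mem_Gset (hΦnonneg : ∀ x, 0 ≤ x → 0 ≤ Φ x) {k c x₀ : ℝ} (hk : 0 < k)
    (hc : 0 < c) (hgrowth : ∀ x, x₀ ≤ x → c * x ^ (1 + 1 / k) ≤ Φ x) {r : ℝ} {g : Plane → ℝ}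
    (hg : g ∈ Gset Φ r) {A R : ℝ} (hA : 0 < A) (hAx₀ : x₀ ≤ A) (hR : 0 < R) :
    r ≤ π * R ^ 2 * A + (1 / (c * A ^ (1 / k)) + 2 / R ^ 2) * Ifun Φ g := by
  obtain ⟨hint, hg0, hen, rfl⟩ := hg
  have hB : MeasurableSet (Metric.ball (0 : Plane) R) := measurableSet_ball
  have hind : Integrable ((Metric.ball (0 : Plane) R).indicator fun _ => A) :=
    (integrable_indicator_iff hB).2 (integrableOn_const measure_ball_lt_top.ne)
  calc ∫ v, g v ≤ ∫ v, (Metric.ball 0 R).indicator (fun _ => A) v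
        + (1 / (c * A ^ (1 / k)) + 2 / R ^ 2) * ((‖v‖ ^ 2 / 2) * g v + Φ (g v)) :=
        integral_mono hint (hind.add (hen.const_mul _)) fun v =>
          le_indicator_add_mul_energy hΦnonneg hk hc hgrowth hA hAx₀ hR (hg0 v) v
    _ = π * R ^ 2 * A + (1 / (c * A ^ (1 / k)) + 2 / R ^ 2) * Ifun Φ g := by
        rw [integral_add hind (hen.const_mul _), integral_const_mul, integral_indicator_const _ hB,
          measureReal_def, EuclideanSpace.volume_ball_fin_two, smul_eq_mul, Ifun,
          ENNReal.toReal_mul, ENNReal.toReal_pow, ENNReal.toReal_ofReal hR.le, ENNReal.toReal_ofReal pi_nonneg]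
        ring

/-- Optimizing the splitting with `R ^ 2 = u` and `A = x₁ u ^ k`, where `u ^ 4 = 1 + Ifun Φ g`,
gives `r ≤ C₀ u ^ 3`; this is where `k ≤ 2` enters. -/
lemma exists_rpow_four_thirds_le_one_add_Ifun (hΦnonneg : ∀ x, 0 ≤ x → 0 ≤ Φ x) {k c x₀ : ℝ}
    (hk0 : 0 < k) (hk2 : k ≤ 2) (hc : 0 < c)
    (hgrowth : ∀ x, x₀ ≤ x → c * x ^ (1 + 1 / k) ≤ Φ x) :
    ∃ D ≥ 0, ∀ (r : ℝ) (g : Plane → ℝ), g ∈ Gset Φ r →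
      r ^ (4 / 3 : ℝ) ≤ D * (1 + Ifun Φ g) := by
  set x₁ := max x₀ 1
  have hx₁ : 1 ≤ x₁ := le_max_right _ _
  set C₀ := π * x₁ + 1 / (c * x₁ ^ (1 / k)) + 2
  refine ⟨C₀ ^ (4 / 3 : ℝ), by positivity, fun r g hg => ?_⟩
  set I := Ifun Φ g
  have hI : 0 ≤ I := Ifun_nonneg hΦnonneg hg.2.1
  set u := (1 + I) ^ ((4 : ℕ)⁻¹ : ℝ)
  have hu4 : u ^ 4 = 1 + I := Real.rpow_inv_natCast_pow (by positivity) (by norm_num)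
  have hu1 : 1 ≤ u := Real.one_le_rpow (by linarith) (by positivity)
  have hu0 : 0 < u := zero_lt_one.trans_le hu1
  have hA : x₀ ≤ x₁ * u ^ k :=
    (le_max_left _ _).trans (le_mul_of_one_le_right (by positivity) (Real.one_le_rpow hu1 hk0.le))
  have h := mass_le_of_mem_Gset hΦnonneg hk0 hc hgrowth hg (by positivity) hA (Real.sqrt_pos.2 hu0)
  rw [Real.sq_sqrt hu0.le, Real.mul_rpow (by positivity) (by positivity), ← Real.rpow_mul hu0.le,
    mul_one_div_cancel hk0.ne', Real.rpow_one] at h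
  have hkin : u * u ^ k ≤ u ^ 3 := by
    rw [← Real.rpow_one_add' hu0.le (by positivity), ← Real.rpow_natCast]
    exact Real.rpow_le_rpow_of_exponent_le hu1 (by push_cast; linarith)
  have hIu : I / u ≤ u ^ 3 := by
    rw [div_le_iff₀ hu0]
    nlinarith
  have hcx : 0 < c * x₁ ^ (1 / k) := by positivity
  have hbound : r ≤ C₀ * u ^ 3 :=
    calc r ≤ π * u * (x₁ * u ^ k) + (1 / (c * (x₁ ^ (1 / k) * u)) + 2 / u) * I := h
      _ = π * x₁ * (u * u ^ k) + (1 / (c * x₁ ^ (1 / k)) + 2) * (I / u) := by field_simp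
      _ ≤ π * x₁ * u ^ 3 + (1 / (c * x₁ ^ (1 / k)) + 2) * u ^ 3 := by gcongr
      _ = C₀ * u ^ 3 := by ring
  calc r ^ (4 / 3 : ℝ)
      ≤ (C₀ * u ^ 3) ^ (4 / 3 : ℝ) := Real.rpow_le_rpow (hg.2.2.2 ▸ integral_nonneg hg.2.1)
        hbound (by norm_num)
    _ = C₀ ^ (4 / 3 : ℝ) * (1 + I) := by
      rw [Real.mul_rpow (by positivity) (by positivity), ← Real.rpow_natCast_mul hu0.le, ← hu4,
        ← Real.rpow_natCast u 4]
      norm_num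

lemma exists_rpow_four_thirds_le_Psi (hΦ0 : Φ 0 = 0) (hΦnonneg : ∀ x, 0 ≤ x → 0 ≤ Φ x) {k c x₀ : ℝ}
    (hk0 : 0 < k) (hk2 : k ≤ 2) (hc : 0 < c)
    (hgrowth : ∀ x, x₀ ≤ x → c * x ^ (1 + 1 / k) ≤ Φ x) :
    ∃ C > 0, ∀ r, 0 ≤ r → r ^ (4 / 3 : ℝ) ≤ C * (r + Psi Φ r) := by
  obtain ⟨D, hD, h⟩ := exists_rpow_four_thirds_le_one_add_Ifun hΦnonneg hk0 hk2 hc hgrowth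
  refine ⟨1 + D, by positivity, fun r hr => ?_⟩
  have hIfun : ∀ g ∈ Gset Φ r, r ^ (4 / 3 : ℝ) ≤ (1 + D) * (r + Ifun Φ g) := fun g hg => by
    have hI := Ifun_nonneg hΦnonneg hg.2.1
    have := h r g hg
    rcases le_or_gt r 1 with h1 | h1
    · nlinarith [Real.rpow_le_self_of_le_one hr h1 (by norm_num : (1 : ℝ) ≤ 4 / 3)]
    · nlinarith
  have : r ^ (4 / 3 : ℝ) / (1 + D) - r ≤ Psi Φ r := by
    refine le_csInf ((Gset_nonempty hΦ0 hr).image _) ?_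
    rintro _ ⟨g, hg, rfl⟩
    rw [sub_le_iff_le_add, div_le_iff₀ (by positivity)]
    linarith [hIfun g hg]
  rw [sub_le_iff_le_add, div_le_iff₀ (by positivity)] at this
  linarith

lemma exists_measurable_mem_Gset_Ifun_lt (hΦ0 : Φ 0 = 0) {r ε : ℝ} (hr : 0 ≤ r) (hε : 0 < ε) :
    ∃ H : Plane → ℝ, Measurable H ∧ H ∈ Gset Φ r ∧ Ifun Φ H < Psi Φ r + ε := by
  obtain ⟨_, ⟨h, hh, rfl⟩, hlt⟩ :=
    exists_lt_of_csInf_lt ((Gset_nonempty hΦ0 hr).image _) (lt_add_of_pos_right _ hε)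
  obtain ⟨H, hHm, hH0, hHh⟩ := exists_measurable_nonneg_ae_eq hh.1.aestronglyMeasurable hh.2.1
  have hen : (fun v : Plane => (‖v‖ ^ 2 / 2) * H v + Φ (H v))
      =ᵐ[volume] fun v => (‖v‖ ^ 2 / 2) * h v + Φ (h v) := by
    filter_upwards [hHh] with v hv
    rw [hv]
  refine ⟨H, hHm, ⟨hh.1.congr hHh.symm, hH0, hh.2.2.1.congr hen.symm, ?_⟩, ?_⟩
  · rw [integral_congr_ae hHh, hh.2.2.2]
  · rwa [Ifun, integral_congr_ae hen]

end ReducedCasimir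

section PhaseSpace

variable {Φ : ℝ → ℝ} {M : ℝ} {f : Phase → ℝ}

lemma integrable_spatialDensity (hf : f ∈ FM Φ M) : Integrable (spatialDensity f) := by
  have hint := hf.1
  rw [Measure.volume_eq_prod] at hint
  exact hint.integral_prod_left

lemma spatialDensity_nonneg (hf : f ∈ FM Φ M) (x : Plane) : 0 ≤ spatialDensity f x :=
  integral_nonneg fun v => hf.2.1 (x, v)

lemma integral_spatialDensity (hf : f ∈ FM Φ M) : ∫ x, spatialDensity f x = M := by
  have hint := hf.1
  rw [← hf.2.2.2.2, Measure.volume_eq_prod] at *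
  exact (integral_prod f hint).symm

lemma integrable_kinetic_add_Phi (hf : f ∈ FM Φ M) :
    Integrable (fun p : Phase => (‖p.2‖ ^ 2 / 2) * f p + Φ (f p)) (volume.prod volume) := by
  rw [← Measure.volume_eq_prod]
  exact hf.2.2.1.add hf.2.2.2.1

lemma ae_mem_Gset_slice (hf : f ∈ FM Φ M) :
    ∀ᵐ x, (fun v => f (x, v)) ∈ Gset Φ (spatialDensity f x) := by
  have hint := hf.1
  rw [Measure.volume_eq_prod] at hint
  filter_upwards [hint.prod_right_ae, (integrable_kinetic_add_Phi hf).prod_right_ae]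
    with x hx hex
  exact ⟨hx, fun v => hf.2.1 (x, v), hex, rfl⟩

lemma integrable_Ifun_slice (hf : f ∈ FM Φ M) :
    Integrable fun x => Ifun Φ (fun v => f (x, v)) :=
  (integrable_kinetic_add_Phi hf).integral_prod_left

lemma Ekin_add_Casimir_eq_integral_Ifun (hf : f ∈ FM Φ M) :
    Ekin f + Casimir Φ f = ∫ x, Ifun Φ (fun v => f (x, v)) := by
  rw [Ekin, Casimir, ← integral_add hf.2.2.1 hf.2.2.2.1, Measure.volume_eq_prod,
    integral_prod _ (integrable_kinetic_add_Phi hf)]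
  rfl

lemma integrable_Psi_spatialDensity (hΦconv : ConvexOn ℝ (Ici 0) Φ)
    (hΦc : ContinuousOn Φ (Ici 0)) (hΦ0 : Φ 0 = 0) (hΦnonneg : ∀ x, 0 ≤ x → 0 ≤ Φ x)
    (hf : f ∈ FM Φ M) : Integrable fun x => Psi Φ (spatialDensity f x) := by
  refine (integrable_Ifun_slice hf).mono'
    ((Psi_monotone hΦconv hΦc hΦ0 hΦnonneg).measurable.comp_aemeasurable
      (integrable_spatialDensity hf).aemeasurable).aestronglyMeasurable ?_
  filter_upwards [ae_mem_Gset_slice hf] with x hx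
  rw [Real.norm_of_nonneg (Psi_nonneg hΦnonneg _)]
  exact Psi_le_Ifun hΦnonneg hx

lemma integral_Psi_spatialDensity_le (hΦconv : ConvexOn ℝ (Ici 0) Φ)
    (hΦc : ContinuousOn Φ (Ici 0)) (hΦ0 : Φ 0 = 0) (hΦnonneg : ∀ x, 0 ≤ x → 0 ≤ Φ x)
    (hf : f ∈ FM Φ M) : ∫ x, Psi Φ (spatialDensity f x) ≤ Ekin f + Casimir Φ f := by
  rw [Ekin_add_Casimir_eq_integral_Ifun hf]
  refine integral_mono_ae (integrable_Psi_spatialDensity hΦconv hΦc hΦ0 hΦnonneg hf)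
    (integrable_Ifun_slice hf) ?_
  filter_upwards [ae_mem_Gset_slice hf] with x hx
  exact Psi_le_Ifun hΦnonneg hx

lemma mem_FM_of_forall_mem_Gset (hΦc : ContinuousOn Φ (Ici 0)) (hΦnonneg : ∀ x, 0 ≤ x → 0 ≤ Φ x)
    {g : Phase → ℝ} (hg : Measurable g) {ρ maj : Plane → ℝ}
    (hslice : ∀ x, (fun v => g (x, v)) ∈ Gset Φ (ρ x)) (hρ : Integrable ρ)
    (hmaj : Integrable maj) (hle : ∀ x, Ifun Φ (fun v => g (x, v)) ≤ maj x) :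
    g ∈ FM Φ (∫ x, ρ x) := by
  have hg0 : ∀ p, 0 ≤ g p := fun p => (hslice p.1).2.1 p.2
  have hkin_le : ∀ x, ∫ v, (‖v‖ ^ 2 / 2) * g (x, v) ≤ maj x := fun x => by
    have : 0 ≤ ∫ v, Φ (g (x, v)) := integral_nonneg fun v => hΦnonneg _ (hg0 (x, v))
    linarith [hle x, Ifun_eq_of_mem_Gset hΦnonneg (hslice x)]
  have hPhi_le : ∀ x, ∫ v, Φ (g (x, v)) ≤ maj x := fun x => by
    have : 0 ≤ ∫ v, (‖v‖ ^ 2 / 2) * g (x, v) :=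
      integral_nonneg fun v => mul_nonneg (by positivity) (hg0 (x, v))
    linarith [hle x, Ifun_eq_of_mem_Gset hΦnonneg (hslice x)]
  have hint : Integrable g (volume.prod volume) :=
    integrable_prod_of_integral_le hg.aestronglyMeasurable hg0 (fun x => (hslice x).1) hρ
      fun x => (hslice x).2.2.2.le
  refine ⟨Measure.volume_eq_prod Plane Plane ▸ hint, hg0, ?_, ?_, ?_⟩ <;>
    rw [Measure.volume_eq_prod]
  · exact integrable_prod_of_integral_le
      ((by fun_prop : Continuous fun p : Phase => ‖p.2‖ ^ 2 / 2).aestronglyMeasurable.mul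
        hg.aestronglyMeasurable)
      (fun p => mul_nonneg (by positivity) (hg0 p))
      (fun x => integrable_kinetic_of_mem_Gset hΦnonneg (hslice x)) hmaj hkin_le
  · exact integrable_prod_of_integral_le
      (hΦc.comp_aestronglyMeasurable_of_nonneg hg.aestronglyMeasurable hg0)
      (fun p => hΦnonneg _ (hg0 p)) (fun x => integrable_Phi_of_mem_Gset hΦnonneg (hslice x))
      hmaj hPhi_le
  · rw [integral_prod _ hint]
    exact integral_congr_ae (Eventually.of_forall fun x => (hslice x).2.2.2)

lemma measurable_ite_comp_smul {H : ℤ → Plane → ℝ} (hH : ∀ j, Measurable (H j))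
    {ρ s : Plane → ℝ} {N : Plane → ℤ} (hρ : Measurable ρ) (hs : Measurable s)
    (hN : Measurable N) :
    Measurable fun p : Phase => if 0 < ρ p.1 then H (N p.1) (s p.1 • p.2) else 0 := by
  have hH' : Measurable fun q : Plane × ℤ => H q.2 q.1 := measurable_from_prod_countable_left hH
  exact Measurable.ite (measurableSet_lt measurable_const (hρ.comp measurable_fst))
    (hH'.comp (((hs.comp measurable_fst).smul measurable_snd).prodMk (hN.comp measurable_fst)))
    measurable_const

/-- Near-minimizers are fixed once and for all at the masses `b ^ j`, `j ∈ ℤ`, and transported to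
the mass `ρ x` by `dilate_mem_Gset`; this makes the profile measurable in `x` without any
measurable selection theorem. -/
lemma exists_measurable_slices_le_Psi (hΦconv : ConvexOn ℝ (Ici 0) Φ)
    (hΦc : ContinuousOn Φ (Ici 0)) (hΦ0 : Φ 0 = 0) (hΦnonneg : ∀ x, 0 ≤ x → 0 ≤ Φ x)
    {ρ : Plane → ℝ} (hρ : Measurable ρ) (hρ0 : ∀ x, 0 ≤ ρ x) {b ε : ℝ} (hb : 1 < b)
    (hε : 0 < ε) :
    ∃ g : Phase → ℝ, Measurable g ∧ ∀ x, (fun v => g (x, v)) ∈ Gset Φ (ρ x) ∧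
      Ifun Φ (fun v => g (x, v)) ≤ b ^ 2 * (Psi Φ (ρ x) + ε * ρ x) := by
  have hb0 : 0 < b := zero_lt_one.trans hb
  choose H hHm hHmem hHlt using fun j : ℤ =>
    exists_measurable_mem_Gset_Ifun_lt hΦ0 (zpow_pos hb0 j).le (mul_pos hε (zpow_pos hb0 j))
  set N : Plane → ℤ := fun x => ⌊logb b (ρ x)⌋
  set a : Plane → ℝ := fun x => ρ x / b ^ N x
  set g : Phase → ℝ := fun p => if 0 < ρ p.1 then H (N p.1) ((√(a p.1))⁻¹ • p.2) else 0
  have hN : Measurable N := Int.measurable_floor.comp (hρ.log.div_const _)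
  have ha : Measurable a := hρ.div ((measurable_from_top (f := fun j : ℤ => b ^ j)).comp hN)
  refine ⟨g, measurable_ite_comp_smul hHm hρ ha.sqrt.inv hN, fun x => ?_⟩
  by_cases hx : 0 < ρ x
  · obtain ⟨hlow, hhigh⟩ := mem_Ico_zpow_floor_logb hb hx
    have hbN : 0 < b ^ N x := zpow_pos hb0 _
    have ha1 : 1 ≤ a x := (one_le_div hbN).2 hlow
    have hab : a x ≤ b := (div_le_iff₀ hbN).2 hhigh.le
    obtain ⟨hmem, hle⟩ := dilate_mem_Gset hΦnonneg (hHmem (N x)) ha1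
    have hslice : (fun v => g (x, v)) = fun v => H (N x) ((√(a x))⁻¹ • v) := by
      ext v
      simp [g, hx]
    rw [hslice]
    refine ⟨by rwa [div_mul_cancel₀ _ hbN.ne'] at hmem, hle.trans ?_⟩
    have hPsi := Psi_monotone hΦconv hΦc hΦ0 hΦnonneg hlow
    have hI := Ifun_nonneg hΦnonneg (hHmem (N x)).2.1
    calc a x ^ 2 * Ifun Φ (H (N x)) ≤ b ^ 2 * (Psi Φ (b ^ N x) + ε * b ^ N x) :=
          mul_le_mul (pow_le_pow_left₀ (by linarith) hab 2) (hHlt (N x)).le hI (by positivity)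
      _ ≤ b ^ 2 * (Psi Φ (ρ x) + ε * ρ x) := by gcongr
  · have hρx : ρ x = 0 := le_antisymm (not_lt.1 hx) (hρ0 x)
    have hslice : (fun v => g (x, v)) = fun _ => 0 := by
      ext v
      simp [g, hx]
    rw [hslice, hρx, Ifun_zero hΦ0]
    have := Psi_nonneg hΦnonneg 0
    exact ⟨zero_mem_Gset hΦ0, by positivity⟩

lemma exists_mem_FM_spatialDensity_ae_eq (hΦconv : ConvexOn ℝ (Ici 0) Φ)
    (hΦc : ContinuousOn Φ (Ici 0)) (hΦ0 : Φ 0 = 0) (hΦnonneg : ∀ x, 0 ≤ x → 0 ≤ Φ x)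
    (hf : f ∈ FM Φ M) {t : ℝ} (ht : 0 < t) :
    ∃ g ∈ FM Φ M, spatialDensity g =ᵐ[volume] spatialDensity f ∧
      Ekin g + Casimir Φ g ≤ (1 + t) ^ 2 * ((∫ x, Psi Φ (spatialDensity f x)) + t * M) := by
  obtain ⟨ρ, hρm, hρ0, hρf⟩ := exists_measurable_nonneg_ae_eq
    (integrable_spatialDensity hf).aestronglyMeasurable (spatialDensity_nonneg hf)
  have hρ : Integrable ρ := (integrable_spatialDensity hf).congr hρf.symm
  have hM : ∫ x, ρ x = M := by rw [integral_congr_ae hρf, integral_spatialDensity hf]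
  have hPsiρ : (fun x => Psi Φ (ρ x)) =ᵐ[volume] fun x => Psi Φ (spatialDensity f x) := by
    filter_upwards [hρf] with x hx
    rw [hx]
  have hPsi : Integrable fun x => Psi Φ (ρ x) :=
    (integrable_Psi_spatialDensity hΦconv hΦc hΦ0 hΦnonneg hf).congr hPsiρ.symm
  obtain ⟨g, hgm, hg⟩ :=
    exists_measurable_slices_le_Psi hΦconv hΦc hΦ0 hΦnonneg hρm hρ0 (lt_add_of_pos_right 1 ht) ht
  have hmaj : Integrable fun x => (1 + t) ^ 2 * (Psi Φ (ρ x) + t * ρ x) :=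
    (hPsi.add (hρ.const_mul t)).const_mul _
  have hgFM : g ∈ FM Φ M :=
    hM ▸ mem_FM_of_forall_mem_Gset hΦc hΦnonneg hgm (fun x => (hg x).1) hρ hmaj fun x => (hg x).2
  refine ⟨g, hgFM, ?_, ?_⟩
  · have : spatialDensity g = ρ := funext fun x => (hg x).1.2.2.2
    rwa [this]
  · rw [Ekin_add_Casimir_eq_integral_Ifun hgFM]
    calc ∫ x, Ifun Φ (fun v => g (x, v)) ≤ ∫ x, (1 + t) ^ 2 * (Psi Φ (ρ x) + t * ρ x) :=
          integral_mono (integrable_Ifun_slice hgFM) hmaj fun x => (hg x).2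
      _ = (1 + t) ^ 2 * ((∫ x, Psi Φ (spatialDensity f x)) + t * M) := by
          rw [integral_const_mul, integral_add hPsi (hρ.const_mul t), integral_const_mul,
            integral_congr_ae hPsiρ, hM]

lemma spatialDensity_mem_FMr (hΦconv : ConvexOn ℝ (Ici 0) Φ) (hΦc : ContinuousOn Φ (Ici 0))
    (hΦ0 : Φ 0 = 0) (hΦnonneg : ∀ x, 0 ≤ x → 0 ≤ Φ x) {C : ℝ}
    (hC : ∀ r, 0 ≤ r → r ^ (4 / 3 : ℝ) ≤ C * (r + Psi Φ r)) (hf : f ∈ FM Φ M) :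
    spatialDensity f ∈ FMr Φ M := by
  have hPsi := integrable_Psi_spatialDensity hΦconv hΦc hΦ0 hΦnonneg hf
  exact ⟨integrable_spatialDensity hf, spatialDensity_nonneg hf,
    memLp_of_rpow_le_mul_add (by norm_num) hC (integrable_spatialDensity hf)
      (spatialDensity_nonneg hf) hPsi, hPsi, integral_spatialDensity hf⟩

lemma ECr_le_EC (hΦconv : ConvexOn ℝ (Ici 0) Φ) (hΦc : ContinuousOn Φ (Ici 0)) (hΦ0 : Φ 0 = 0)
    (hΦnonneg : ∀ x, 0 ≤ x → 0 ≤ Φ x) (ρext : Plane → ℝ) (hf : f ∈ FM Φ M) :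
    ECr Φ ρext (spatialDensity f) ≤ EC Φ ρext f := by
  have := integral_Psi_spatialDensity_le hΦconv hΦc hΦ0 hΦnonneg hf
  rw [ECr, EC]
  linarith

lemma Epot_congr_ae (ρext : Plane → ℝ) {ρ₁ ρ₂ : Plane → ℝ} (h : ρ₁ =ᵐ[volume] ρ₂) :
    Epot ρext ρ₁ = Epot ρext ρ₂ := by
  have hself : (fun x => ∫ y, ρ₁ x * ρ₁ y / dist x y)
      =ᵐ[volume] fun x => ∫ y, ρ₂ x * ρ₂ y / dist x y := by
    filter_upwards [h] with x hx
    exact integral_congr_ae (by filter_upwards [h] with y hy; rw [hx, hy])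
  have hext : (fun x => ∫ y, ρ₁ x * ρext y / dist x y)
      =ᵐ[volume] fun x => ∫ y, ρ₂ x * ρext y / dist x y := by
    filter_upwards [h] with x hx
    rw [hx]
  rw [Epot, Epot, Epot1, Epot1, EpotExt, EpotExt, integral_congr_ae hself,
    integral_congr_ae hext]

lemma EC_le_ECr_of_forall_EC_le (hΦconv : ConvexOn ℝ (Ici 0) Φ) (hΦc : ContinuousOn Φ (Ici 0))
    (hΦ0 : Φ 0 = 0) (hΦnonneg : ∀ x, 0 ≤ x → 0 ≤ Φ x) {ρext : Plane → ℝ} (hf : f ∈ FM Φ M)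
    (hmin : ∀ g ∈ FM Φ M, EC Φ ρext f ≤ EC Φ ρext g) :
    EC Φ ρext f ≤ ECr Φ ρext (spatialDensity f) := by
  set ρ := spatialDensity f
  set P := ∫ x, Psi Φ (ρ x)
  have hbound : ∀ t > 0, EC Φ ρext f ≤ (1 + t) ^ 2 * (P + t * M) + Epot ρext ρ := by
    intro t ht
    obtain ⟨g, hg, hρg, hEg⟩ := exists_mem_FM_spatialDensity_ae_eq hΦconv hΦc hΦ0 hΦnonneg hf ht
    calc EC Φ ρext f ≤ EC Φ ρext g := hmin g hg
      _ = Ekin g + Casimir Φ g + Epot ρext ρ := by rw [EC, Epot_congr_ae ρext hρg]; ring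
      _ ≤ _ := by gcongr
  have hlim : Tendsto (fun t => (1 + t) ^ 2 * (P + t * M) + Epot ρext ρ) (𝓝[>] 0)
      (𝓝 (ECr Φ ρext ρ)) := by
    have hcont : Continuous fun t : ℝ => (1 + t) ^ 2 * (P + t * M) + Epot ρext ρ := by fun_prop
    simpa [ECr] using (hcont.tendsto 0).mono_left nhdsWithin_le_nhds
  exact ge_of_tendsto hlim (eventually_nhdsWithin_of_forall hbound)

end PhaseSpace

theorem reduction_inequality_general
    (k M c : ℝ) (hk0 : 0 < k) (hk1 : k < 1) (hc : 0 < c)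
    (Φ : ℝ → ℝ)
    (hPhiConv : StrictConvexOn ℝ (Set.Ici 0) Φ)
    (hPhiC1 : ContDiffOn ℝ 1 Φ (Set.Ici 0))
    (hPhiNonneg : ∀ x : ℝ, 0 ≤ x → 0 ≤ Φ x)
    (hPhi0 : Φ 0 = 0)
    (hPhiGrowth : ∃ x₀ : ℝ, ∀ x : ℝ, x₀ ≤ x → c * x ^ (1 + 1 / k) ≤ Φ x)
    (ρext : Plane → ℝ)
 :
    ∀ f ∈ FM Φ M,
      spatialDensity f ∈ FMr Φ M ∧
      ECr Φ ρext (spatialDensity f) ≤ EC Φ ρext f ∧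
      ((∀ g ∈ FM Φ M, EC Φ ρext f ≤ EC Φ ρext g) →
        EC Φ ρext f = ECr Φ ρext (spatialDensity f)) := by
  have hconv := hPhiConv.convexOn
  have hcont := hPhiC1.continuousOn
  obtain ⟨x₀, hx₀⟩ := hPhiGrowth
  obtain ⟨C, -, hC⟩ := exists_rpow_four_thirds_le_Psi hPhi0 hPhiNonneg hk0 (by linarith) hc hx₀
  intro f hf
  have hle := ECr_le_EC hconv hcont hPhi0 hPhiNonneg ρext hf
  exact ⟨spatialDensity_mem_FMr hconv hcont hPhi0 hPhiNonneg hC hf, hle,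
    fun hmin => (EC_le_ECr_of_forall_EC_le hconv hcont hPhi0 hPhiNonneg hf hmin).antisymm hle⟩

theorem reduction_inequality
    (k M c : ℝ) (hk0 : 0 < k) (hk1 : k < 1) (hM : 0 < M) (hc : 0 < c)
    (Φ : ℝ → ℝ)
    (hPhiConv : StrictConvexOn ℝ (Set.Ici 0) Φ)
    (hPhiC1 : ContDiffOn ℝ 1 Φ (Set.Ici 0))
    (hPhiNonneg : ∀ x : ℝ, 0 ≤ x → 0 ≤ Φ x)
    (hPhi0 : Φ 0 = 0)
    (hPhi'0 : derivWithin Φ (Set.Ici 0) 0 = 0)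
    (hPhiGrowth : ∃ x₀ : ℝ, ∀ x : ℝ, x₀ ≤ x → c * x ^ (1 + 1 / k) ≤ Φ x)
    (ρext : Plane → ℝ) (hExtInt : Integrable ρext)
    (hExtPos : ∀ x, 0 ≤ ρext x)
    (hExt43 : MemLp ρext (ENNReal.ofReal (4 / 3)) volume)
 :
    ∀ f ∈ FM Φ M,
      spatialDensity f ∈ FMr Φ M ∧
      ECr Φ ρext (spatialDensity f) ≤ EC Φ ρext f ∧
      ((∀ g ∈ FM Φ M, EC Φ ρext f ≤ EC Φ ρext g) →
        EC Φ ρext f = ECr Φ ρext (spatialDensity f)) :=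
  reduction_inequality_general k M c hk0 hk1 hc Φ hPhiConv hPhiC1 hPhiNonneg hPhi0 hPhiGrowth ρext
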